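/- Let g : ℝⁿ → ℝ be convex and let A : ℝⁿ → ℝ be an affine map. Assume interior({x ∈ ℝⁿ : g(x) = A(x)}) is nonempty, and let z ∈ ℝⁿ with g(z) = A(z). Then z ∈ closure(interior({x ∈ ℝⁿ : g(x) = A(x)})). -/

import Mathlib

/-!
Since `g - A` is convex and vanishes on a neighbourhood of a point of the interior, that point is
a local, hence global, minimum: `A ≤ g` everywhere. The agreement set is therefore the sublevel set
`{g - A ≤ 0}`, which is convex, and a convex set with nonempty interior lies in the closure of its
interior.
-/

open Set

theorem AffineMap.concaveOn {𝕜 E β : Type*} [Ring 𝕜] [PartialOrder 𝕜] [AddCommGroup E]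
    [Module 𝕜 E] [AddCommGroup β] [PartialOrder β] [Module 𝕜 β] (f : E →ᵃ[𝕜] β) {s : Set E}
    (hs : Convex 𝕜 s) : ConcaveOn 𝕜 s f :=
  ⟨hs, fun _ _ _ _ _ _ _ _ hab => (Convex.combo_affine_apply hab).ge⟩

section

variable {E : Type*} [AddCommGroup E] [TopologicalSpace E] [Module ℝ E] [IsTopologicalAddGroup E]
  [ContinuousSMul ℝ E] {g : E → ℝ} (A : E →ᵃ[ℝ] ℝ)

theorem ConvexOn.affineMap_le_of_mem_interior_setOf_eq (hg : ConvexOn ℝ univ g) {x₀ : E}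
    (hx₀ : x₀ ∈ interior {x | g x = A x}) (p : E) : A p ≤ g p := by
  have hx₀_eq : g x₀ = A x₀ := (interior_subset hx₀ :)
  have hmin : IsLocalMin (g - ⇑A) x₀ := by
    filter_upwards [mem_interior_iff_mem_nhds.1 hx₀] with x (hx : g x = A x)
    simp [hx, hx₀_eq]
  simpa only [Pi.sub_apply, hx₀_eq, sub_self, sub_nonneg] using
    IsMinOn.of_isLocalMin_of_convex_univ hmin (hg.sub (A.concaveOn convex_univ)) p

theorem ConvexOn.convex_setOf_eq_affineMap (hg : ConvexOn ℝ univ g)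
    (hne : (interior {x | g x = A x}).Nonempty) : Convex ℝ {x | g x = A x} := by
  obtain ⟨x₀, hx₀⟩ := hne
  have hS : {x | g x = A x} = {x ∈ univ | (g - ⇑A) x ≤ 0} := by
    ext x
    simp only [mem_ofPred_eq, mem_univ, true_and, Pi.sub_apply, sub_nonpos]
    exact ⟨le_of_eq, fun h => le_antisymm h (hg.affineMap_le_of_mem_interior_setOf_eq A hx₀ x)⟩
  rw [hS]
  exact (hg.sub (A.concaveOn convex_univ)).convex_le 0

end

/-- Main conclusion of Remark SM5 (SVM). For a convex `g` and an affine map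
`A` with nonempty `interior {x | g x = A x}`, every point `z` with `g z = A z` lies in
`closure (interior {x | g x = A x})`. -/
theorem stmt13 {n : ℕ} (g : EuclideanSpace ℝ (Fin n) → ℝ)
    (hg : ConvexOn ℝ Set.univ g)
    (A : EuclideanSpace ℝ (Fin n) →ᵃ[ℝ] ℝ)
    (hne : (interior {x | g x = A x}).Nonempty)
    (z : EuclideanSpace ℝ (Fin n)) (hz : g z = A z) :
    z ∈ closure (interior {x | g x = A x}) := by
  rw [(hg.convex_setOf_eq_affineMap A hne).closure_interior_eq_closure_of_nonempty_interior hne]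
  exact subset_closure hz
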